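/- Let K ⊂ ℝ² be compact with d = diam(K) > 0, let A ≥ 0, and let a : ℝ² → ℝ be measurable with |a(y)| ≤ A for all y and a(y) = 0 for y ∉ K. Let f : ℝ² → [0,∞) be measurable, and suppose there are x̄ ∈ ℝ², R > 0 and c > 0 such that the open ball B(x̄, R) is contained in K and f(y) ≥ c for all y ∈ B(x̄, R). Then for every x ∈ K, M[a,f](x) ≥ e^{−dA} · c · πR² / d. -/

import Mathlib

open MeasureTheory Real Set
open scoped ENNReal

/-- The unit direction vector in `ℝ²` with angle `φ`; integrating over `φ ∈ (0, 2π]`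
realizes integration over the unit circle `S¹` with its arclength measure. -/
noncomputable def dir (φ : ℝ) : EuclideanSpace ℝ (Fin 2) :=
  (WithLp.equiv 2 (Fin 2 → ℝ)).symm ![Real.cos φ, Real.sin φ]

/-- The averaging operator
`M[a,f](x) = ∫_{S¹} ∫₀^∞ f(x+tθ) exp(−∫₀^t a(x+sθ) ds) dt dθ`,
here as a lower Lebesgue integral (the integrand is nonnegative when `f ≥ 0`). -/
noncomputable def Mop (a f : EuclideanSpace ℝ (Fin 2) → ℝ)
    (x : EuclideanSpace ℝ (Fin 2)) : ℝ≥0∞ :=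
  ∫⁻ φ in Set.Ioc 0 (2 * π), ∫⁻ t in Set.Ioi (0 : ℝ),
    ENNReal.ofReal (f (x + t • dir φ) * Real.exp (-∫ s in (0:ℝ)..t, a (x + s • dir φ)))

/-! In polar coordinates centred at `x ∈ K`, the ball `B = B(x̄, R)` has area
`∫∫ t · 1_B(x + tθ) dt dθ = πR²`. A point `x + tθ ∈ B ⊆ K` has `t ≤ d`, and the attenuation
along the ray is `∫₀ᵗ a ≤ dA` because `a` vanishes beyond distance `d` from `x`. So on `B` the
integrand of `M[a,f](x)` is at least `c e^{-dA} ≥ (c e^{-dA} / d) · t`, and integrating this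
against the polar measure gives the bound. -/

open Metric

theorem norm_dir (φ : ℝ) : ‖dir φ‖ = 1 := by
  simp [dir, EuclideanSpace.norm_eq, Fin.sum_univ_two]

theorem dir_add_pi (φ : ℝ) : dir (φ + π) = -dir φ := by
  ext i; fin_cases i <;> simp [dir, cos_add_pi, sin_add_pi]

theorem dist_add_smul_dir (x : EuclideanSpace ℝ (Fin 2)) (φ : ℝ) {t : ℝ} (ht : 0 ≤ t) :
    dist (x + t • dir φ) x = t := by
  rw [dist_self_add_left, norm_smul, norm_dir, mul_one, Real.norm_of_nonneg ht]

noncomputable def euclideanPlaneEquivProd : EuclideanSpace ℝ (Fin 2) ≃ᵐ ℝ × ℝ :=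
  (MeasurableEquiv.toLp 2 (Fin 2 → ℝ)).symm.trans MeasurableEquiv.finTwoArrow

theorem measurePreserving_euclideanPlaneEquivProd :
    MeasurePreserving euclideanPlaneEquivProd :=
  (volume_preserving_finTwoArrow ℝ).comp
    (EuclideanSpace.volume_preserving_symm_measurableEquiv_toLp _)

theorem euclideanPlaneEquivProd_smul_dir (t φ : ℝ) :
    euclideanPlaneEquivProd (t • dir φ) = polarCoord.symm (t, φ) := by
  simp [euclideanPlaneEquivProd, dir, MeasurableEquiv.finTwoArrow, polarCoord_symm_apply]

theorem lintegral_Ioo_Ioi_smul_dir (g : EuclideanSpace ℝ (Fin 2) → ℝ≥0∞) (hg : Measurable g) :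
    ∫⁻ φ in Ioo (-π) π, ∫⁻ t in Ioi (0 : ℝ), ENNReal.ofReal t * g (t • dir φ) = ∫⁻ y, g y := by
  set e := euclideanPlaneEquivProd
  calc _ = ∫⁻ p in polarCoord.target, ENNReal.ofReal p.1 • (g ∘ e.symm) (polarCoord.symm p) := by
        rw [polarCoord_target, Measure.volume_eq_prod, setLIntegral_prod_symm]
        · simp only [smul_eq_mul, Function.comp_apply, e, ← euclideanPlaneEquivProd_smul_dir,
            MeasurableEquiv.symm_apply_apply]
        · fun_prop
    _ = ∫⁻ q, g (e.symm q) := lintegral_comp_polarCoord_symm _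
    _ = ∫⁻ y, g y := (measurePreserving_euclideanPlaneEquivProd.symm e).lintegral_comp_emb
        e.symm.measurableEmbedding g

theorem lintegral_Ioc_Ioi_add_smul_dir (g : EuclideanSpace ℝ (Fin 2) → ℝ≥0∞) (hg : Measurable g)
    (x : EuclideanSpace ℝ (Fin 2)) :
    ∫⁻ φ in Ioc 0 (2 * π), ∫⁻ t in Ioi (0 : ℝ), ENNReal.ofReal t * g (x + t • dir φ)
      = ∫⁻ y, g y := by
  have hIoc : (· + π) ⁻¹' Ioc 0 (2 * π) = Ioc (-π) π := by
    ext φ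
    simp only [mem_preimage, mem_Ioc]
    constructor <;> rintro ⟨h₁, h₂⟩ <;> constructor <;> linarith
  rw [← (measurePreserving_add_right volume π).setLIntegral_comp_preimage_emb
    (measurableEmbedding_addRight π), hIoc, Measure.restrict_congr_set Ioo_ae_eq_Ioc.symm]
  simp only [dir_add_pi, smul_neg, ← sub_eq_add_neg]
  rw [lintegral_Ioo_Ioi_smul_dir (fun y => g (x - y)) (by fun_prop)]
  exact lintegral_sub_left_eq_self g x

theorem intervalIntegral_le_mul_of_eq_zero_of_lt {u : ℝ → ℝ} {A D t : ℝ} (hu : Measurable u)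
    (hA : ∀ s, |u s| ≤ A) (hD : 0 ≤ D) (hu0 : ∀ s, D < s → u s = 0) (ht : 0 ≤ t) :
    ∫ s in (0 : ℝ)..t, u s ≤ D * A := by
  have hint : ∀ a b : ℝ, IntervalIntegrable u volume a b := fun a b =>
    (intervalIntegrable_const (c := A)).mono_fun hu.aestronglyMeasurable
      (ae_of_all _ fun s => by simpa using (hA s).trans (le_abs_self A))
  have hle : ∀ r, 0 ≤ r → ∫ s in (0 : ℝ)..r, u s ≤ r * A := fun r hr => by
    simpa using intervalIntegral.integral_mono_on hr (hint 0 r) intervalIntegrable_const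
      fun s _ => (abs_le.1 (hA s)).2
  rcases le_total t D with htD | hDt
  · exact (hle t ht).trans (mul_le_mul_of_nonneg_right htD ((abs_nonneg _).trans (hA 0)))
  · have htail : ∫ s in D..t, u s = 0 := by
      rw [intervalIntegral.integral_of_le hDt]
      exact setIntegral_eq_zero_of_forall_eq_zero fun s hs => hu0 s hs.1
    rw [← intervalIntegral.integral_add_adjacent_intervals (hint 0 D) (hint D t), htail, add_zero]
    exact hle D hD

theorem intervalIntegral_add_smul_dir_le_diam_mul {K : Set (EuclideanSpace ℝ (Fin 2))}
    (hK : Bornology.IsBounded K) {a : EuclideanSpace ℝ (Fin 2) → ℝ} (ha : Measurable a) {A : ℝ}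
    (haA : ∀ y, |a y| ≤ A) (haK : ∀ y ∉ K, a y = 0) {x : EuclideanSpace ℝ (Fin 2)} (hx : x ∈ K)
    (φ : ℝ) {t : ℝ} (ht : 0 ≤ t) :
    ∫ s in (0 : ℝ)..t, a (x + s • dir φ) ≤ diam K * A := by
  refine intervalIntegral_le_mul_of_eq_zero_of_lt (by fun_prop) (fun s => haA _) diam_nonneg
    (fun s hs => haK _ fun hsK => ?_) ht
  have := dist_le_diam_of_mem hK hsK hx
  rw [dist_add_smul_dir x φ (diam_nonneg.trans hs.le)] at this
  linarith

theorem ofReal_mul_volume_le_Mop {a f : EuclideanSpace ℝ (Fin 2) → ℝ}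
    {x : EuclideanSpace ℝ (Fin 2)} {S : Set (EuclideanSpace ℝ (Fin 2))} (hS : MeasurableSet S)
    {C : ℝ} (hC : ∀ φ t, 0 < t → x + t • dir φ ∈ S →
      C * t ≤ f (x + t • dir φ) * exp (-∫ s in (0 : ℝ)..t, a (x + s • dir φ))) :
    ENNReal.ofReal C * volume S ≤ Mop a f x := by
  rw [← lintegral_indicator_one hS, ← lintegral_Ioc_Ioi_add_smul_dir _
    (measurable_one.indicator hS) x, ← lintegral_const_mul' _ _ ENNReal.ofReal_ne_top]
  refine lintegral_mono fun φ => ?_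
  rw [← lintegral_const_mul' _ _ ENNReal.ofReal_ne_top]
  refine lintegral_mono_ae <| (ae_restrict_iff' measurableSet_Ioi).2 <| ae_of_all _ fun t ht => ?_
  by_cases hmem : x + t • dir φ ∈ S
  · rw [indicator_of_mem hmem, Pi.one_apply, mul_one, ← ENNReal.ofReal_mul' (le_of_lt ht)]
    exact ENNReal.ofReal_le_ofReal (hC φ t ht hmem)
  · simp [indicator_of_notMem hmem]

theorem stmt3_general (K : Set (EuclideanSpace ℝ (Fin 2))) (hK : IsCompact K)
    (d : ℝ) (hd : Metric.diam K = d) (hdpos : 0 < d)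
    (A : ℝ)
    (a : EuclideanSpace ℝ (Fin 2) → ℝ) (hameas : Measurable a)
    (habd : ∀ y, |a y| ≤ A) (hasupp : ∀ y ∉ K, a y = 0)
    (f : EuclideanSpace ℝ (Fin 2) → ℝ)
    (xbar : EuclideanSpace ℝ (Fin 2)) (R c : ℝ) (hR : 0 < R) (hc : 0 < c)
    (hball : Metric.ball xbar R ⊆ K)
    (hfball : ∀ y ∈ Metric.ball xbar R, c ≤ f y) :
    ∀ x ∈ K,
      ENNReal.ofReal (Real.exp (-(d * A)) * c * π * R ^ 2 / d) ≤ Mop a f x := by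
  intro x hx
  subst hd
  calc ENNReal.ofReal (exp (-(diam K * A)) * c * π * R ^ 2 / diam K)
      = ENNReal.ofReal (exp (-(diam K * A)) * c / diam K) * volume (ball xbar R) := by
        rw [EuclideanSpace.volume_ball_fin_two, ← ENNReal.ofReal_pow hR.le,
          ← ENNReal.ofReal_mul (by positivity), ← ENNReal.ofReal_mul (by positivity)]
        congr 1
        field_simp
    _ ≤ Mop a f x := by
      refine ofReal_mul_volume_le_Mop measurableSet_ball fun φ t ht hy => ?_
      have htd : t ≤ diam K := by
        simpa [dist_add_smul_dir x φ ht.le] using dist_le_diam_of_mem hK.isBounded (hball hy) hx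
      have hatt :=
        intervalIntegral_add_smul_dir_le_diam_mul hK.isBounded hameas habd hasupp hx φ ht.le
      calc exp (-(diam K * A)) * c / diam K * t ≤ exp (-(diam K * A)) * c := by
            rw [div_mul_eq_mul_div, div_le_iff₀ hdpos]; gcongr
        _ ≤ c * exp (-∫ s in (0 : ℝ)..t, a (x + s • dir φ)) := by rw [mul_comm]; gcongr
        _ ≤ f (x + t • dir φ) * exp (-∫ s in (0 : ℝ)..t, a (x + s • dir φ)) := by
            gcongr; exact hfball _ hy

/-- If `f ≥ c > 0` on a ball `B(x̄,R) ⊆ K` and `|a| ≤ A` with `a` supported in `K`,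
`diam K = d`, then `M[a,f](x) ≥ e^{−dA} c π R² / d` for every `x ∈ K`. -/
theorem stmt3 (K : Set (EuclideanSpace ℝ (Fin 2))) (hK : IsCompact K)
    (d : ℝ) (hd : Metric.diam K = d) (hdpos : 0 < d)
    (A : ℝ) (hA0 : 0 ≤ A)
    (a : EuclideanSpace ℝ (Fin 2) → ℝ) (hameas : Measurable a)
    (habd : ∀ y, |a y| ≤ A) (hasupp : ∀ y ∉ K, a y = 0)
    (f : EuclideanSpace ℝ (Fin 2) → ℝ) (hfmeas : Measurable f) (hf0 : ∀ y, 0 ≤ f y)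
    (xbar : EuclideanSpace ℝ (Fin 2)) (R c : ℝ) (hR : 0 < R) (hc : 0 < c)
    (hball : Metric.ball xbar R ⊆ K)
    (hfball : ∀ y ∈ Metric.ball xbar R, c ≤ f y) :
    ∀ x ∈ K,
      ENNReal.ofReal (Real.exp (-(d * A)) * c * π * R ^ 2 / d) ≤ Mop a f x :=
  stmt3_general K hK d hd hdpos A a hameas habd hasupp f xbar R c hR hc hball hfball
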